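/- Let n ≥ 1 and let φ: 𝔽₂[t₁,…,t_n] → 𝔽₂[t₁,…,t_n] be the ring homomorphism with φ(tᵢ)=tᵢ+tᵢ². For 1 ≤ m ≤ n, the homogeneous component of polynomial degree m+2 of φ(e_m) equals e₂·e_m + m·e₁·e_{m+1} + binom(m−1,2)·e_{m+2}, where e_k is the k-th elementary symmetric polynomial (e_k := 0 for k > n) and the integer coefficients m and binom(m−1,2) are reduced mod 2. -/

import Mathlib

/-!
Since `t + t² = t (1 + t)`, the ring map `φ` sends `t^S` to `∑_{T ⊆ S} t^S t^T`, a sum of terms of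
degree `|S| + |T|`; so the degree `m + 2` part of `φ(e_m)` is `L = ∑_{|S| = m, T ⊆ S, |T| = 2} t^S t^T`.
In `e_k e_m = ∑ t^T t^S = ∑ t^(T ∪ S) t^(T ∩ S)`, a pair `(V, I)` with `I ⊆ V`, `|I| = j`, arises as
`(T ∪ S, T ∩ S)` exactly `binom(k + m - 2j, k - j)` times (choose `T \ S` inside `V \ I`). For `k = 2`
and `k = 1` this gives `e₂ e_m = binom(m+2, 2) e_{m+2} + m Q + L` and `e₁ e_{m+1} = (m+2) e_{m+2} + Q`.
Eliminating `Q` mod 2 leaves `e_{m+2}` with coefficient `binom(m+2, 2) + m (m+2) ≡ binom(m-1, 2)`.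
-/

open MvPolynomial Finset

theorem Finset.card_pairs_with_union_inter {α : Type*} [Fintype α] [DecidableEq α] {k m : ℕ}
    {V I : Finset α} (hIV : I ⊆ V) (hIk : #I ≤ k) (hV : #V + #I = k + m) :
    #{p ∈ powersetCard k univ ×ˢ powersetCard m univ | p.1 ∪ p.2 = V ∧ p.1 ∩ p.2 = I}
      = (#V - #I).choose (k - #I) := by
  rw [← card_sdiff_of_subset hIV, ← card_powersetCard]
  refine card_nbij' (fun p => p.1 \ p.2) (fun A => (I ∪ A, V \ A)) ?_ ?_ ?_ ?_
  · rintro ⟨T, S⟩ hp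
    simp only [mem_coe, mem_filter, mem_product, mem_powersetCard] at hp ⊢
    obtain ⟨⟨⟨-, hT⟩, -, -⟩, rfl, rfl⟩ := hp
    exact ⟨sdiff_subset_sdiff subset_union_left inter_subset_right,
      by rw [card_sdiff, inter_comm, hT]⟩
  · intro A hA
    simp only [mem_coe, mem_powersetCard] at hA
    obtain ⟨hAV, hA⟩ := hA
    have hdisj : Disjoint I A := disjoint_of_subset_right hAV disjoint_sdiff
    have hAV' : A ⊆ V := hAV.trans sdiff_subset
    simp only [mem_coe, mem_filter, mem_product, mem_powersetCard, subset_univ, true_and]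
    refine ⟨⟨?_, ?_⟩, ?_, ?_⟩
    · rw [card_union_of_disjoint hdisj, hA]; omega
    · rw [card_sdiff_of_subset hAV', hA]; omega
    · grind
    · grind
  · rintro ⟨T, S⟩ hp
    simp only [mem_coe, mem_filter] at hp
    obtain ⟨-, rfl, rfl⟩ := hp
    ext x <;> grind
  · intro A hA
    simp only [mem_coe, mem_powersetCard] at hA
    grind

theorem Nat.two_dvd_choose_two_add (m : ℕ) (hm : 1 ≤ m) :
    2 ∣ (m + 2).choose 2 + m * (m + 2) + (m - 1).choose 2 := by
  obtain ⟨k, rfl⟩ := Nat.exists_eq_add_of_le' hm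
  obtain ⟨r, hr⟩ := Nat.even_mul_succ_self k
  have hpascal : (k + 1 + 2).choose 2 = k.choose 2 + 3 * k + 3 := by
    simp only [Nat.choose_succ_succ', Nat.choose_zero_right, zero_add, Nat.choose_one_right,
      Nat.reduceAdd]
    ring
  rw [hpascal, Nat.add_sub_cancel]
  exact ⟨k.choose 2 + r + 3 * k + 3, by linarith⟩

namespace MvPolynomial

variable {σ R : Type*} [CommSemiring R]

noncomputable def prodX (S : Finset σ) : MvPolynomial σ R := ∏ i ∈ S, X i

theorem isHomogeneous_prodX (S : Finset σ) : (prodX S : MvPolynomial σ R).IsHomogeneous #S := by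
  simpa [prodX] using IsHomogeneous.prod S (fun i => (X i : MvPolynomial σ R)) (fun _ => 1)
    (fun i _ => isHomogeneous_X R i)

theorem prodX_union_mul_prodX_inter [DecidableEq σ] (S T : Finset σ) :
    (prodX (S ∪ T) : MvPolynomial σ R) * prodX (S ∩ T) = prodX S * prodX T :=
  prod_union_inter

theorem aeval_X_add_X_sq_prodX (S : Finset σ) :
    aeval (fun i => (X i + X i ^ 2 : MvPolynomial σ R)) (prodX S : MvPolynomial σ R)
      = ∑ T ∈ S.powerset, prodX S * prodX T := by
  simp_rw [prodX, map_prod, aeval_X, ← mul_sum, ← prod_one_add, ← prod_mul_distrib]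
  exact prod_congr rfl fun i _ => by ring

variable [Fintype σ]

theorem esymm_eq_sum_prodX (n : ℕ) :
    esymm σ R n = ∑ S ∈ powersetCard n univ, prodX S :=
  rfl

-- Since `X^S X^T = X^(S \ T) (X^T)²`, this is the monomial symmetric polynomial `m_(2^k 1^(n-k))`.
noncomputable def subsetPairSum (n k : ℕ) : MvPolynomial σ R :=
  ∑ S ∈ powersetCard n univ, ∑ T ∈ powersetCard k S, prodX S * prodX T

theorem subsetPairSum_zero_right (n : ℕ) :
    (subsetPairSum n 0 : MvPolynomial σ R) = esymm σ R n := by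
  simp [subsetPairSum, prodX, esymm]

theorem homogeneousComponent_aeval_X_add_X_sq_esymm (m k : ℕ) :
    homogeneousComponent (m + k)
        (aeval (fun i => (X i + X i ^ 2 : MvPolynomial σ R)) (esymm σ R m))
      = subsetPairSum m k := by
  simp_rw [esymm_eq_sum_prodX, map_sum, aeval_X_add_X_sq_prodX, map_sum]
  refine sum_congr rfl fun S hS => ?_
  rw [powersetCard_eq_filter, sum_filter]
  refine sum_congr rfl fun T _ => ?_
  rw [homogeneousComponent_of_mem
    ((isHomogeneous_prodX S).mul (isHomogeneous_prodX T) : _ ∈ homogeneousSubmodule σ R _),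
    (mem_powersetCard.mp hS).2]
  simp only [add_right_inj, eq_comm]

theorem sum_pairs_with_inter_card [DecidableEq σ] (k m j : ℕ) (hj : j ≤ k) :
    ∑ p ∈ powersetCard k univ ×ˢ powersetCard m univ with #(p.1 ∩ p.2) = j,
        (prodX p.1 : MvPolynomial σ R) * prodX p.2
      = (k + m - 2 * j).choose (k - j) • subsetPairSum (k + m - j) j := by
  let g : Finset σ × Finset σ → Σ _ : Finset σ, Finset σ := fun p => ⟨p.1 ∪ p.2, p.1 ∩ p.2⟩
  let F : (Σ _ : Finset σ, Finset σ) → MvPolynomial σ R := fun q => prodX q.1 * prodX q.2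
  set P := powersetCard k (univ : Finset σ) ×ˢ powersetCard m (univ : Finset σ)
  set s := {p ∈ P | #(p.1 ∩ p.2) = j}
  have hg : ∀ p ∈ s, g p ∈ (powersetCard (k + m - j) univ).sigma (powersetCard j) := by
    rintro ⟨T, S⟩ hp
    simp only [s, P, mem_filter, mem_product, mem_powersetCard] at hp
    obtain ⟨⟨⟨-, hT⟩, -, hS⟩, hTS⟩ := hp
    have := card_union_add_card_inter T S
    simp only [g, mem_sigma, mem_powersetCard, subset_univ, true_and]
    exact ⟨by omega, inter_subset_union, hTS⟩
  have hfiber : ∀ q ∈ (powersetCard (k + m - j) univ).sigma (powersetCard j),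
      #{p ∈ s | g p = q} = (k + m - 2 * j).choose (k - j) := by
    rintro ⟨V, I⟩ hq
    simp only [mem_sigma, mem_powersetCard] at hq
    obtain ⟨⟨-, hV⟩, hIV, hI⟩ := hq
    have hfilter : {p ∈ s | g p = ⟨V, I⟩} = {p ∈ P | p.1 ∪ p.2 = V ∧ p.1 ∩ p.2 = I} := by
      rw [filter_filter]
      refine filter_congr fun p _ => ?_
      simp only [g, Sigma.mk.injEq, heq_eq_eq]
      exact ⟨And.right, fun h => ⟨h.2 ▸ hI, h⟩⟩
    rw [hfilter, card_pairs_with_union_inter hIV (by omega) (by omega), hV, hI]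
    congr 1
    omega
  calc _ = ∑ p ∈ s, F (g p) :=
        sum_congr rfl fun p _ => (prodX_union_mul_prodX_inter p.1 p.2).symm
    _ = ∑ q ∈ (powersetCard (k + m - j) univ).sigma (powersetCard j),
          (k + m - 2 * j).choose (k - j) • F q := by
        rw [← sum_fiberwise_of_maps_to' hg F]
        refine sum_congr rfl fun q hq => ?_
        rw [sum_const, hfiber q hq]
    _ = _ := by rw [← smul_sum, subsetPairSum, sum_sigma']

theorem esymm_mul_esymm (k m : ℕ) :
    esymm σ R k * esymm σ R m
      = ∑ j ∈ range (k + 1), (k + m - 2 * j).choose (k - j) • subsetPairSum (k + m - j) j := by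
  classical
  have hmaps : ∀ p ∈ powersetCard k (univ : Finset σ) ×ˢ powersetCard m univ,
      #(p.1 ∩ p.2) ∈ range (k + 1) := by
    intro p hp
    rw [mem_range, Nat.lt_succ_iff, ← (mem_powersetCard.mp (mem_product.mp hp).1).2]
    exact card_le_card inter_subset_left
  rw [esymm_eq_sum_prodX, esymm_eq_sum_prodX, sum_mul_sum, ← sum_product',
    ← sum_fiberwise_of_maps_to hmaps]
  exact sum_congr rfl fun j hj =>
    sum_pairs_with_inter_card k m j (Nat.lt_succ_iff.mp (mem_range.mp hj))

theorem esymm_one_mul_esymm (m : ℕ) :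
    esymm σ R 1 * esymm σ R (m + 1) = (m + 2) • esymm σ R (m + 2) + subsetPairSum (m + 1) 1 := by
  rw [esymm_mul_esymm, sum_range_succ, sum_range_one, subsetPairSum_zero_right,
    show 1 + (m + 1) = m + 2 by omega]
  simp

theorem esymm_two_mul_esymm (m : ℕ) :
    esymm σ R 2 * esymm σ R m
      = (m + 2).choose 2 • esymm σ R (m + 2) + m • subsetPairSum (m + 1) 1
        + subsetPairSum m 2 := by
  rw [esymm_mul_esymm, sum_range_succ, sum_range_succ, sum_range_one, subsetPairSum_zero_right,
    show 2 + m = m + 2 by omega]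
  simp

end MvPolynomial

theorem stmt_4_general (n : ℕ) (m : ℕ) (hm1 : 1 ≤ m) :
    homogeneousComponent (m + 2)
      (aeval (fun i => X i + (X i) ^ 2) (esymm (Fin n) (ZMod 2) m)) =
    esymm (Fin n) (ZMod 2) 2 * esymm (Fin n) (ZMod 2) m
      + C ((m : ℕ) : ZMod 2) * esymm (Fin n) (ZMod 2) 1 * esymm (Fin n) (ZMod 2) (m + 1)
      + C ((Nat.choose (m - 1) 2 : ℕ) : ZMod 2) * esymm (Fin n) (ZMod 2) (m + 2) := by
  obtain ⟨t, ht⟩ := Nat.two_dvd_choose_two_add m hm1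
  have hcast := congrArg (Nat.cast : ℕ → MvPolynomial (Fin n) (ZMod 2)) ht
  have h2 := esymm_two_mul_esymm (σ := Fin n) (R := ZMod 2) m
  have h1 := esymm_one_mul_esymm (σ := Fin n) (R := ZMod 2) m
  have htwo : (2 : MvPolynomial (Fin n) (ZMod 2)) = 0 := CharTwo.two_eq_zero
  push_cast [nsmul_eq_mul] at h1 h2 hcast
  rw [homogeneousComponent_aeval_X_add_X_sq_esymm, map_natCast, map_natCast]
  linear_combination -h2 - (m : MvPolynomial (Fin n) (ZMod 2)) * h1
    - esymm (Fin n) (ZMod 2) (m + 2) * hcast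
    - (t * esymm (Fin n) (ZMod 2) (m + 2) + m * subsetPairSum (m + 1) 1) * htwo

/-- Mod 2 Wu formula Sq⁴c_m = c₂c_m + m·c₁c_{m+1} + binom(m-1,2)·c_{m+2}. -/
theorem stmt_4 (n : ℕ) (hn : 1 ≤ n) (m : ℕ) (hm1 : 1 ≤ m) (hmn : m ≤ n) :
    homogeneousComponent (m + 2)
      (aeval (fun i => X i + (X i) ^ 2) (esymm (Fin n) (ZMod 2) m)) =
    esymm (Fin n) (ZMod 2) 2 * esymm (Fin n) (ZMod 2) m
      + C ((m : ℕ) : ZMod 2) * esymm (Fin n) (ZMod 2) 1 * esymm (Fin n) (ZMod 2) (m + 1)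
      + C ((Nat.choose (m - 1) 2 : ℕ) : ZMod 2) * esymm (Fin n) (ZMod 2) (m + 2) :=
  stmt_4_general n m hm1
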